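/- arXiv:1808.09226 — 2 statements merged into one kernel-verified Lean document; each statement's English description precedes it below -/
import Mathlib

section
/- (Correctness of Rule 1) Suppose U : X → ℤ∪{∞} satisfies U(c) = ∞ and the invariant that U(z) > S[ω](z,c) for all z ≠ c, where ω is any weight function with |ω(y,z) − ω°(y,z)| ≤ W for all edges, and c is the unique Schulze winner for ω. Define ω'(y,z) = min(ω°(y,z) + W, U(z)). Then for every x ≠ c, S[ω'](c,x) > S[ω](x,c); i.e., setting U(x) ← S[ω'](c,x) preserves the invariant. -/
open scoped Classical

namespace Schulze

def pstr {X : Type} (ω : X → X → WithTop ℤ) : List X → WithTop ℤ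
  | a :: b :: l => min (ω a b) (pstr ω (b :: l))
  | _ => ⊤

def IsPath {X : Type} (x y : X) (p : List X) : Prop :=
  p.Nodup ∧ p.head? = some x ∧ p.getLast? = some y

noncomputable def S {X : Type} [Fintype X] [DecidableEq X]
    (ω : X → X → WithTop ℤ) (x y : X) : WithBot (WithTop ℤ) :=
  (Finset.univ.filter (fun p : {l : List X // l.Nodup} => IsPath x y p.1)).sup
    (fun p => ((pstr ω p.1 : WithTop ℤ) : WithBot (WithTop ℤ)))

def ofInt {X : Type} (ω : X → X → ℤ) : X → X → WithTop ℤ := fun x y => (ω x y : ℤ)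

/-- Appending to the left can only decrease the strength. -/
lemma pstr_suffix_le {X : Type} (ω : X → X → WithTop ℤ) :
    ∀ l m : List X, pstr ω (l ++ m) ≤ pstr ω m := by
  intro l m
  induction l with
  | nil => simp
  | cons a l ih =>
    cases h : l ++ m with
    | nil =>
      obtain ⟨h1, h2⟩ := List.append_eq_nil_iff.mp h
      subst h2
      simp [pstr]
    | cons b t =>
      have heq : pstr ω ((a :: l) ++ m) = min (ω a b) (pstr ω (l ++ m)) := by
        rw [List.cons_append, h]
        rw [pstr, ← h]
      rw [heq]
      exact le_trans (min_le_right _ _) ih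

/-- Gluing two strong paths gives a strong walk. -/
lemma pstr_append_ge {X : Type} (ω : X → X → WithTop ℤ) :
    ∀ (l : List X) (x : X) (t : List X), l.getLast? = some x →
      min (pstr ω l) (pstr ω (x :: t)) ≤ pstr ω (l ++ t) := by
  intro l
  induction l with
  | nil => intro x t hl; simp at hl
  | cons a l ih =>
    intro x t hl
    cases l with
    | nil =>
      simp only [List.getLast?_singleton, Option.some.injEq] at hl
      subst hl
      simp [pstr]
    | cons b l' =>
      rw [List.getLast?_cons_cons] at hl
      have h2 := ih x t hl
      show min (pstr ω (a :: b :: l')) (pstr ω (x :: t)) ≤ pstr ω (a :: b :: (l' ++ t))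
      rw [pstr, pstr, min_assoc]
      exact min_le_min_left _ (h2.trans_eq (by rfl))

/-- Every walk can be shortcut to a simple path of at least the same strength. -/
lemma exists_path_of_walk {X : Type} (ω : X → X → WithTop ℤ) :
    ∀ (n : ℕ) (p : List X), p.length ≤ n → ∀ u v : X, p.head? = some u →
      p.getLast? = some v →
      ∃ q : List X, q.Nodup ∧ IsPath u v q ∧ pstr ω p ≤ pstr ω q ∧ q ⊆ p := by
  intro n
  induction n with
  | zero =>
    intro p hp u v hu hv
    cases p <;> simp_all
  | succ n ih =>
    intro p hp u v hu hv
    cases p with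
    | nil => simp at hu
    | cons a rest =>
      have hau : a = u := by simpa using hu
      subst hau
      by_cases hmem : a ∈ rest
      · obtain ⟨r1, r2, hr⟩ := List.append_of_mem hmem
        subst hr
        have hsplit : a :: (r1 ++ a :: r2) = (a :: r1) ++ (a :: r2) := by simp
        have hlast : (a :: r2).getLast? = some v := by
          rw [hsplit, List.getLast?_append_of_ne_nil _ (by simp)] at hv
          exact hv
        have hlen : (a :: r2).length ≤ n := by
          simp only [List.length_cons, List.length_append] at hp ⊢
          omega
        obtain ⟨q, hq1, hq2, hq3, hq4⟩ := ih (a :: r2) hlen a v rfl hlast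
        refine ⟨q, hq1, hq2, ?_, ?_⟩
        · calc pstr ω (a :: (r1 ++ a :: r2)) = pstr ω ((a :: r1) ++ (a :: r2)) := by
                rw [hsplit]
            _ ≤ pstr ω (a :: r2) := pstr_suffix_le ω _ _
            _ ≤ pstr ω q := hq3
        · intro y hy
          have := hq4 hy
          simp only [List.mem_cons, List.mem_append] at this ⊢
          tauto
      · cases rest with
        | nil =>
          have hv' : a = v := by simpa using hv
          subst hv'
          exact ⟨[a], by simp, ⟨by simp, rfl, rfl⟩, le_refl _, by simp⟩
        | cons b rest' =>
          have hlast : (b :: rest').getLast? = some v := by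
            rwa [List.getLast?_cons_cons] at hv
          obtain ⟨q, hq1, hq2, hq3, hq4⟩ := ih (b :: rest')
            (by simpa using Nat.le_of_succ_le_succ hp) b v rfl hlast
          obtain ⟨hqn, hqh, hqt⟩ := hq2
          cases q with
          | nil => simp at hqh
          | cons b' q' =>
            have hb' : b' = b := by simpa using hqh
            subst hb'
            refine ⟨a :: b' :: q', ?_, ⟨?_, rfl, ?_⟩, ?_, ?_⟩
            · exact List.nodup_cons.mpr ⟨fun hc => hmem (hq4 hc), hq1⟩
            · exact List.nodup_cons.mpr ⟨fun hc => hmem (hq4 hc), hq1⟩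
            · rw [List.getLast?_cons_cons]; exact hqt
            · rw [pstr, pstr]
              exact min_le_min_left _ hq3
            · intro y hy
              rcases List.mem_cons.mp hy with h | h
              · exact List.mem_cons.mpr (Or.inl h)
              · exact List.mem_cons_of_mem _ (hq4 h)

lemma pstr_le_S {X : Type} [Fintype X] [DecidableEq X] (ω : X → X → WithTop ℤ)
    {u v : X} {p : List X} (hn : p.Nodup) (hp : IsPath u v p) :
    ((pstr ω p : WithTop ℤ) : WithBot (WithTop ℤ)) ≤ S ω u v := by
  have : (⟨p, hn⟩ : {l : List X // l.Nodup}) ∈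
      Finset.univ.filter (fun p : {l : List X // l.Nodup} => IsPath u v p.1) :=
    Finset.mem_filter.mpr ⟨Finset.mem_univ _, hp⟩
  exact Finset.le_sup (f := fun p : {l : List X // l.Nodup} =>
    ((pstr ω p.1 : WithTop ℤ) : WithBot (WithTop ℤ))) this

lemma walk_le_S {X : Type} [Fintype X] [DecidableEq X] (ω : X → X → WithTop ℤ)
    {u v : X} {p : List X} (hu : p.head? = some u) (hv : p.getLast? = some v) :
    ((pstr ω p : WithTop ℤ) : WithBot (WithTop ℤ)) ≤ S ω u v := by
  obtain ⟨q, hq1, hq2, hq3, _⟩ := exists_path_of_walk ω p.length p le_rfl u v hu hv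
  exact le_trans (by exact_mod_cast hq3) (pstr_le_S ω hq1 hq2)

lemma S_attained {X : Type} [Fintype X] [DecidableEq X] (ω : X → X → WithTop ℤ)
    {u v : X} (h : u ≠ v) :
    ∃ p : List X, p.Nodup ∧ IsPath u v p ∧ S ω u v = ((pstr ω p : WithTop ℤ) : WithBot (WithTop ℤ)) := by
  have hmem : (⟨[u, v], by simp [h]⟩ : {l : List X // l.Nodup}) ∈
      Finset.univ.filter (fun p : {l : List X // l.Nodup} => IsPath u v p.1) := by
    refine Finset.mem_filter.mpr ⟨Finset.mem_univ _, ?_⟩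
    exact ⟨by simp [h], rfl, rfl⟩
  obtain ⟨p, hp, hsup⟩ := Finset.exists_mem_eq_sup _ ⟨_, hmem⟩
    (fun p : {l : List X // l.Nodup} => ((pstr ω p.1 : WithTop ℤ) : WithBot (WithTop ℤ)))
  exact ⟨p.1, p.2, (Finset.mem_filter.mp hp).2, hsup⟩

/-- The key inductive step: along any path to `x` avoiding `c` in its tail,
all modified edge weights exceed `b`. -/
lemma key {X : Type} [Fintype X] [DecidableEq X]
    (ωo : X → X → ℤ) (W : ℤ) (c : X) (ω : X → X → ℤ)
    (hbound : ∀ y z : X, y ≠ z → |ω y z - ωo y z| ≤ W)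
    (U : X → WithTop ℤ)
    (hinv : ∀ z : X, z ≠ c → S (ofInt ω) z c < ((U z : WithBot (WithTop ℤ))))
    (x : X) (hxc : x ≠ c) (pxc : List X) (hx : IsPath x c pxc)
    (b : WithTop ℤ) (hb : b = pstr (ofInt ω) pxc) :
    ∀ q : List X, q.getLast? = some x → q.Chain' (· ≠ ·) → c ∉ q.tail →
      b < pstr (ofInt ω) q →
      b < pstr (fun y z => min (((ωo y z + W : ℤ) : WithTop ℤ)) (U z)) q := by
  intro q
  induction q with
  | nil => intro _ _ _ h; exact h
  | cons y t ih =>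
    intro hlast hchain hcnot hlt
    cases t with
    | nil => exact hlt
    | cons z t' =>
      rw [pstr] at hlt ⊢
      have hyz : y ≠ z := (List.isChain_cons_cons.mp hchain).1
      have hblt1 : b < ofInt ω y z := lt_of_lt_of_le hlt (min_le_left _ _)
      have hblt2 : b < pstr (ofInt ω) (z :: t') := lt_of_lt_of_le hlt (min_le_right _ _)
      have hlast' : (z :: t').getLast? = some x := by
        rwa [List.getLast?_cons_cons] at hlast
      have hznec : z ≠ c := by
        intro hzc; exact hcnot (by simp [hzc])
      -- b < ωo y z + W
      have h1 : b < ((ωo y z + W : ℤ) : WithTop ℤ) := by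
        refine lt_of_lt_of_le hblt1 ?_
        have : ω y z ≤ ωo y z + W := by
          have := hbound y z hyz
          have := abs_le.mp this
          omega
        show ((ω y z : ℤ) : WithTop ℤ) ≤ _
        exact_mod_cast this
      -- b < U z
      have h2 : b < U z := by
        -- build a walk from z to c through x
        obtain ⟨hpn, hph, hpt⟩ := hx
        obtain ⟨u, rfl⟩ : ∃ u, pxc = x :: u := by
          cases pxc with
          | nil => simp at hph
          | cons x' u => exact ⟨u, by rw [show x' = x by simpa using hph]⟩
        · cases u with
          | nil =>
            exfalso; apply hxc; simpa using hpt
          | cons w u' =>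
            have hglue := pstr_append_ge (ofInt ω) (z :: t') x (w :: u') hlast'
            have hwalkhead : ((z :: t') ++ (w :: u')).head? = some z := rfl
            have hwalklast : ((z :: t') ++ (w :: u')).getLast? = some c := by
              rw [List.getLast?_append_of_ne_nil _ (by simp)]
              rwa [List.getLast?_cons_cons] at hpt
            have hws := walk_le_S (ofInt ω) hwalkhead hwalklast
            have hSlt := hinv z hznec
            have : ((pstr (ofInt ω) ((z :: t') ++ (w :: u')) : WithTop ℤ) :
                WithBot (WithTop ℤ)) < (U z : WithBot (WithTop ℤ)) :=
              lt_of_le_of_lt hws hSlt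
            have hwlt : pstr (ofInt ω) ((z :: t') ++ (w :: u')) < U z := by
              exact_mod_cast this
            have hmin : min (pstr (ofInt ω) (z :: t')) (pstr (ofInt ω) (x :: w :: u')) < U z :=
              lt_of_le_of_lt hglue hwlt
            have hble : b ≤ min (pstr (ofInt ω) (z :: t')) (pstr (ofInt ω) (x :: w :: u')) :=
              le_min hblt2.le (le_of_eq hb)
            exact lt_of_le_of_lt hble hmin
      have h3 := ih hlast' hchain.tail (fun hc => hcnot (List.mem_cons_of_mem _ hc)) hblt2
      exact lt_min (lt_min h1 h2) h3

theorem stmt6 {X : Type} [Fintype X] [DecidableEq X]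
    (ωo : X → X → ℤ) (W : ℤ) (hW : 0 ≤ W) (c : X)
    (ω : X → X → ℤ)
    (hbound : ∀ y z : X, y ≠ z → |ω y z - ωo y z| ≤ W)
    (hwin : ∀ y : X, y ≠ c → S (ofInt ω) y c < S (ofInt ω) c y)
    (U : X → WithTop ℤ) (hUc : U c = ⊤)
    (hinv : ∀ z : X, z ≠ c → S (ofInt ω) z c < ((U z : WithBot (WithTop ℤ)))) :
    ∀ x : X, x ≠ c →
      S (ofInt ω) x c <
        S (fun y z => min (((ωo y z + W : ℤ) : WithTop ℤ)) (U z)) c x := by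
  intro x hx
  obtain ⟨pxc, hxn, hxp, hSxc⟩ := S_attained (ofInt ω) hx
  obtain ⟨p, hpn, hpp, hScx⟩ := S_attained (ofInt ω) (Ne.symm hx)
  have hwinx := hwin x hx
  rw [hSxc, hScx] at hwinx
  have hblt : pstr (ofInt ω) pxc < pstr (ofInt ω) p := by exact_mod_cast hwinx
  obtain ⟨hpnod, hph, hpt⟩ := hpp
  have hchain : p.Chain' (· ≠ ·) := List.Pairwise.isChain hpnod
  have hcnot : c ∉ p.tail := by
    cases p with
    | nil => simp at hph
    | cons c' t =>
      have : c' = c := by simpa using hph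
      subst this
      exact (List.nodup_cons.mp hpnod).1
  have hkey := key ωo W c ω hbound U hinv x hx pxc hxp
    (pstr (ofInt ω) pxc) rfl p hpt hchain hcnot hblt
  rw [hSxc]
  calc ((pstr (ofInt ω) pxc : WithTop ℤ) : WithBot (WithTop ℤ))
      < ((pstr (fun y z => min (((ωo y z + W : ℤ) : WithTop ℤ)) (U z)) p : WithTop ℤ) :
          WithBot (WithTop ℤ)) := by exact_mod_cast hkey
    _ ≤ S (fun y z => min (((ωo y z + W : ℤ) : WithTop ℤ)) (U z)) c x :=
        pstr_le_S _ hpn ⟨hpnod, hph, hpt⟩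

end Schulze
end

section
/- (Corollary: sufficiency) If U : X → ℤ∪{∞} with U(c) = ∞ is closed under Rules 1 and 2, and U(x) > ω°(x,c) − W for all x ≠ c, then there exists a single vote ζ (bijection X → {1,…,|X|}) such that, with ω•(x,y) = ω°(x,y)+W when ζ(x) > ζ(y) and ω°(x,y)−W when ζ(x) < ζ(y), c is the unique Schulze winner: S[ω•](c,x) > S[ω•](x,c) for all x ≠ c. -/
/-!
List the candidates greedily, starting from `c` and then repeatedly taking a remaining candidate
`v` of largest `U` that is joined to an already listed `u` by an edge with `U v ≤ ωo u v + W`: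
such an edge exists by Rule 1, because a strongest path from `c` must leave the listed set
somewhere. The vote ranks the candidates in the reverse order of their choice, so every edge used
by the construction is weighted `+W`, and `S(c, x) ≥ U x` follows by induction along the list.
Conversely, along a path from `x ≠ c` to `c`, `U` does not increase until the first edge `a → b`
that goes to `c` or to a larger value of `U`; that edge points upwards in the vote, so it weighs
`ωo a b - W < U a` (by Rule 2, or by the bound on `ωo a c - W`). Hence `S(x, c) < U x`.
-/

open scoped Classical

namespace Schulze

theorem _root_.List.Nodup.idxOf_lt_idxOf_of_sublist {α : Type*} [DecidableEq α] {L : List α}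
    {a b : α} (hL : L.Nodup) (h : [a, b].Sublist L) : L.idxOf a < L.idxOf b := by
  have hidx : L.Pairwise (fun a b => L.idxOf a < L.idxOf b) :=
    List.pairwise_iff_getElem.2 fun i j hi hj hij => by
      rwa [List.Nodup.idxOf_getElem hL, List.Nodup.idxOf_getElem hL]
  exact List.pairwise_iff_forall_sublist.1 hidx h

theorem _root_.List.Pairwise.rel_of_idxOf_lt {α : Type*} [DecidableEq α] {R : α → α → Prop}
    {L : List α} {a b : α} (hR : L.Pairwise R) (ha : a ∈ L) (hb : b ∈ L)
    (h : L.idxOf a < L.idxOf b) : R a b := by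
  have := List.pairwise_iff_getElem.1 hR _ _ (List.idxOf_lt_length_iff.2 ha)
    (List.idxOf_lt_length_iff.2 hb) h
  rwa [List.getElem_idxOf, List.getElem_idxOf] at this

theorem _root_.List.Nodup.exists_equiv_fin_idxOf {α : Type*} [Fintype α] [DecidableEq α]
    {L : List α} (hL : L.Nodup) (hall : ∀ x, x ∈ L) :
    ∃ ζ : α ≃ Fin (Fintype.card α), ∀ a, (ζ a : ℕ) = L.idxOf a := by
  let e := hL.getEquivOfForallMemList L hall
  have hlen : L.length = Fintype.card α := by simpa using Fintype.card_congr e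
  exact ⟨e.symm.trans (finCongr hlen), fun a => rfl⟩

section

variable {X : Type}

theorem pstr_cons_le (ν : X → X → WithTop ℤ) (a : X) : ∀ p : List X, pstr ν (a :: p) ≤ pstr ν p
  | [] => le_rfl
  | _ :: _ => min_le_right _ _

theorem pstr_append_le (ν : X → X → WithTop ℤ) (q : List X) :
    ∀ p : List X, pstr ν (p ++ q) ≤ pstr ν p
  | [] => le_top
  | [_] => le_top
  | _ :: b :: l => min_le_min le_rfl (pstr_append_le ν q (b :: l))

theorem pstr_concat (ν : X → X → WithTop ℤ) (b : X) :
    ∀ (p : List X) {a : X}, p.getLast? = some a → pstr ν (p ++ [b]) = min (pstr ν p) (ν a b)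
  | [], _, h => by simp at h
  | [x], _, h => by
    obtain rfl : x = _ := by simpa using h
    simp [pstr]
  | x :: y :: t, a, h => by
    rw [List.getLast?_cons_cons] at h
    change min (ν x y) (pstr ν (y :: t ++ [b])) = min (min (ν x y) (pstr ν (y :: t))) (ν a b)
    rw [pstr_concat ν b (y :: t) h, min_assoc]

theorem exists_edge_out_of_pstr (ν : X → X → WithTop ℤ) (s : Set X) :
    ∀ (p : List X) {x y : X}, p.head? = some x → p.getLast? = some y → x ∈ s → y ∉ s →
      ∃ u ∈ s, ∃ v ∉ s, pstr ν p ≤ ν u v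
  | [], _, _, h, _, _, _ => by simp at h
  | [z], x, y, hx, hy, hxs, hys => by
    obtain rfl : z = x := by simpa using hx
    obtain rfl : z = y := by simpa using hy
    exact absurd hxs hys
  | z :: w :: t, x, y, hx, hy, hxs, hys => by
    obtain rfl : z = x := by simpa using hx
    by_cases hws : w ∈ s
    · rw [List.getLast?_cons_cons] at hy
      obtain ⟨u, hu, v, hv, hle⟩ := exists_edge_out_of_pstr ν s (w :: t) rfl hy hws hys
      exact ⟨u, hu, v, hv, (pstr_cons_le ν z _).trans hle⟩
    · exact ⟨z, hxs, w, hws, min_le_left _ _⟩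

theorem pstr_lt_of_edges (ν : X → X → WithTop ℤ) (U : X → WithTop ℤ) (c : X)
    (hedge : ∀ a b, a ≠ c → (b = c ∨ U a < U b) → ν a b < U a) :
    ∀ (p : List X) {x : X}, p.head? = some x → p.getLast? = some c → x ≠ c → pstr ν p < U x
  | [], _, h, _, _ => by simp at h
  | [z], x, hx, hc, hxc => by
    obtain rfl : z = x := by simpa using hx
    obtain rfl : z = c := by simpa using hc
    exact absurd rfl hxc
  | z :: b :: t, x, hx, hc, hxc => by
    obtain rfl : z = x := by simpa using hx
    by_cases hb : b = c ∨ U z < U b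
    · exact (min_le_left _ _).trans_lt (hedge z b hxc hb)
    · rw [not_or, not_lt] at hb
      rw [List.getLast?_cons_cons] at hc
      exact (pstr_cons_le ν z _).trans_lt
        ((pstr_lt_of_edges ν U c hedge (b :: t) rfl hc hb.1).trans_le hb.2)

variable [Fintype X] [DecidableEq X]

theorem coe_le_S_iff (ν : X → X → WithTop ℤ) {x y : X} {t : WithTop ℤ} :
    (t : WithBot (WithTop ℤ)) ≤ S ν x y ↔ ∃ p, IsPath x y p ∧ t ≤ pstr ν p := by
  rw [S, Finset.le_sup_iff (WithBot.bot_lt_coe t)]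
  constructor
  · rintro ⟨p, hp, hle⟩
    exact ⟨p.1, (Finset.mem_filter.1 hp).2, WithBot.coe_le_coe.1 hle⟩
  · rintro ⟨p, hp, hle⟩
    exact ⟨⟨p, hp.1⟩, Finset.mem_filter.2 ⟨Finset.mem_univ _, hp⟩, WithBot.coe_le_coe.2 hle⟩

theorem S_lt_coe_iff (ν : X → X → WithTop ℤ) {x y : X} {t : WithTop ℤ} :
    S ν x y < (t : WithBot (WithTop ℤ)) ↔ ∀ p, IsPath x y p → pstr ν p < t := by
  rw [S, Finset.sup_lt_iff (WithBot.bot_lt_coe t)]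
  constructor
  · intro h p hp
    exact WithBot.coe_lt_coe.1 (h ⟨p, hp.1⟩ (Finset.mem_filter.2 ⟨Finset.mem_univ _, hp⟩))
  · intro h p hp
    exact WithBot.coe_lt_coe.2 (h p.1 (Finset.mem_filter.1 hp).2)

theorem top_le_S_self (ν : X → X → WithTop ℤ) (x : X) :
    ((⊤ : WithTop ℤ) : WithBot (WithTop ℤ)) ≤ S ν x x :=
  (coe_le_S_iff ν).2 ⟨[x], ⟨List.nodup_singleton x, rfl, rfl⟩, le_rfl⟩

theorem coe_le_S_of_le_S_of_le (ν : X → X → WithTop ℤ) {x a b : X} {t : WithTop ℤ}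
    (hxa : (t : WithBot (WithTop ℤ)) ≤ S ν x a) (hab : t ≤ ν a b) :
    (t : WithBot (WithTop ℤ)) ≤ S ν x b := by
  obtain ⟨p, ⟨hnd, hx, ha⟩, hle⟩ := (coe_le_S_iff ν).1 hxa
  have hp : p ≠ [] := by rintro rfl; simp at hx
  refine (coe_le_S_iff ν).2 ?_
  by_cases hb : b ∈ p
  · -- the path already visits `b`: cut it there
    obtain ⟨q, r, rfl⟩ := List.append_of_mem hb
    have hq : q ++ [b] ++ r = q ++ b :: r := by simp
    refine ⟨q ++ [b], ⟨?_, ?_, List.getLast?_concat⟩, hle.trans ?_⟩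
    · exact (hq ▸ hnd).sublist (List.sublist_append_left _ _)
    · rwa [← hq, List.head?_append_of_ne_nil _ (by simp)] at hx
    · exact hq ▸ pstr_append_le ν r (q ++ [b])
  · refine ⟨p ++ [b], ⟨?_, ?_, List.getLast?_concat⟩, ?_⟩
    · exact hnd.append (List.nodup_singleton b) (by simpa using hb)
    · rwa [List.head?_append_of_ne_nil _ hp]
    · rw [pstr_concat ν b p ha]
      exact le_min hle hab

theorem coe_le_S_of_ranking (ν : X → X → WithTop ℤ) (U : X → WithTop ℤ) {c : X} (hUc : U c = ⊤)
    {n : ℕ} (r : X → Fin n) (hstep : ∀ v, v ≠ c → ∃ u, r v < r u ∧ U v ≤ U u ∧ U v ≤ ν u v)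
    (v : X) : (U v : WithBot (WithTop ℤ)) ≤ S ν c v := by
  induction v using (InvImage.wf r wellFounded_gt).induction with
  | _ v ih =>
    by_cases hvc : v = c
    · rw [hvc, hUc]
      exact top_le_S_self ν c
    · obtain ⟨u, hru, hUu, hν⟩ := hstep v hvc
      exact coe_le_S_of_le_S_of_le ν ((WithBot.coe_le_coe.2 hUu).trans (ih u hru)) hν

theorem S_lt_of_edges (ν : X → X → WithTop ℤ) (U : X → WithTop ℤ) {c x : X}
    (hedge : ∀ a b, a ≠ c → (b = c ∨ U a < U b) → ν a b < U a) (hxc : x ≠ c) :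
    S ν x c < (U x : WithBot (WithTop ℤ)) :=
  (S_lt_coe_iff ν).2 fun p ⟨_, hx, hc⟩ => pstr_lt_of_edges ν U c hedge p hx hc hxc

theorem exists_edge_out_of_le_S (ν : X → X → WithTop ℤ) {s : Set X} {x y : X} {t : WithTop ℤ}
    (h : (t : WithBot (WithTop ℤ)) ≤ S ν x y) (hx : x ∈ s) (hy : y ∉ s) :
    ∃ u ∈ s, ∃ v ∉ s, t ≤ ν u v := by
  obtain ⟨p, ⟨_, hpx, hpy⟩, hle⟩ := (coe_le_S_iff ν).1 h
  obtain ⟨u, hu, v, hv, huv⟩ := exists_edge_out_of_pstr ν s p hpx hpy hx hy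
  exact ⟨u, hu, v, hv, hle.trans huv⟩

/-- `L` lists candidates from the bottom of the vote up to its top `c`. -/
structure IsSupportedOrder (ν : X → X → WithTop ℤ) (U : X → WithTop ℤ) (c : X) (L : List X) :
    Prop where
  nodup : L.Nodup
  mem : c ∈ L
  pairwise : L.Pairwise fun a b => U a ≤ U b ∧ a ≠ c
  exists_later : ∀ v ∈ L, v ≠ c → ∃ u, [v, u].Sublist L ∧ U v ≤ ν u v

theorem IsSupportedOrder.exists_complete {ν : X → X → WithTop ℤ} {U : X → WithTop ℤ} {c : X}
    (hR1 : ∀ x, x ≠ c → (U x : WithBot (WithTop ℤ)) ≤ S (fun y z => min (ν y z) (U z)) c x)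
    {L : List X} (hL : IsSupportedOrder ν U c L) (hclosed : ∀ z ∉ L, ∀ y ∈ L, U z ≤ U y) :
    ∃ L', IsSupportedOrder ν U c L' ∧ ∀ x, x ∈ L' := by
  by_cases hall : ∀ x, x ∈ L
  · exact ⟨L, hL, hall⟩
  obtain ⟨x, hx⟩ := not_forall.1 hall
  obtain ⟨x₀, hx₀, hmax⟩ := Finset.exists_max_image (Finset.univ.filter (· ∉ L)) U ⟨x, by simpa⟩
  replace hx₀ : x₀ ∉ L := (Finset.mem_filter.1 hx₀).2
  replace hmax : ∀ z ∉ L, U z ≤ U x₀ := fun z hz => hmax z (by simpa)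
  have hx₀c : x₀ ≠ c := fun h => hx₀ (h ▸ hL.mem)
  -- a strongest path from `c` to `x₀` leaves `L` along an edge `u → v`; `v` is then a maximiser too
  obtain ⟨u, hu, v, hv, huv⟩ :=
    exists_edge_out_of_le_S _ (s := {z | z ∈ L}) (hR1 x₀ hx₀c) hL.mem hx₀
  have hUv : U v = U x₀ := le_antisymm (hmax v hv) (huv.trans (min_le_right _ _))
  have hL' : IsSupportedOrder ν U c (v :: L) := by
    refine ⟨List.nodup_cons.2 ⟨hv, hL.nodup⟩, List.mem_cons_of_mem v hL.mem,
      List.pairwise_cons.2 ⟨fun b hb => ⟨hclosed v hv b hb, fun h => hv (h ▸ hL.mem)⟩,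
        hL.pairwise⟩, ?_⟩
    rintro w (_ | ⟨_, hw⟩) hwc
    · exact ⟨u, (List.singleton_sublist.2 hu).cons_cons v, hUv ▸ huv.trans (min_le_left _ _)⟩
    · obtain ⟨u', hsub, hle⟩ := hL.exists_later w hw hwc
      exact ⟨u', hsub.cons v, hle⟩
  refine hL'.exists_complete hR1 fun z hz y hy => ?_
  rw [List.mem_cons, not_or] at hz
  rcases List.mem_cons.1 hy with rfl | hy
  · exact hUv ▸ hmax z hz.2
  · exact hclosed z hz.2 y hy
termination_by Fintype.card X - L.length
decreasing_by
  have := hL'.nodup.length_le_card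
  simp only [List.length_cons] at this ⊢
  omega

theorem exists_ranking {ν : X → X → WithTop ℤ} {U : X → WithTop ℤ} {c : X} (hUc : U c = ⊤)
    (hR1 : ∀ x, x ≠ c → (U x : WithBot (WithTop ℤ)) ≤ S (fun y z => min (ν y z) (U z)) c x) :
    ∃ ζ : X ≃ Fin (Fintype.card X), (∀ a b, ζ a < ζ b → U a ≤ U b ∧ a ≠ c) ∧
      ∀ v, v ≠ c → ∃ u, ζ v < ζ u ∧ U v ≤ ν u v := by
  have hc : IsSupportedOrder ν U c [c] :=
    ⟨List.nodup_singleton c, List.mem_singleton_self c, List.pairwise_singleton _ c,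
      fun v hv hvc => absurd (List.mem_singleton.1 hv) hvc⟩
  obtain ⟨L, hL, hall⟩ := hc.exists_complete hR1 fun z _ y hy => by
    rw [List.mem_singleton.1 hy, hUc]
    exact le_top
  obtain ⟨ζ, hζ⟩ := hL.nodup.exists_equiv_fin_idxOf hall
  refine ⟨ζ, fun a b h => hL.pairwise.rel_of_idxOf_lt (hall a) (hall b) ?_, fun v hvc => ?_⟩
  · rwa [Fin.lt_def, hζ, hζ] at h
  · obtain ⟨u, hsub, hle⟩ := hL.exists_later v (hall v) hvc
    refine ⟨u, ?_, hle⟩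
    rw [Fin.lt_def, hζ, hζ]
    exact hL.nodup.idxOf_lt_idxOf_of_sublist hsub

end

theorem stmt14_general {X : Type} [Fintype X] [DecidableEq X]
    (ωo : X → X → ℤ)
    (W : ℤ) (c : X)
    (U : X → WithTop ℤ) (hUc : U c = ⊤)
    (hR1 : ∀ x : X, x ≠ c →
      ((U x : WithBot (WithTop ℤ)))
        ≤ S (fun y z => min (((ωo y z + W : ℤ) : WithTop ℤ)) (U z)) c x)
    (hR2 : ¬ ∃ x y : X, x ≠ c ∧ y ≠ c ∧ U y < U x ∧ U y ≤ ((ωo y x - W : ℤ) : WithTop ℤ))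
    (hup : ∀ x : X, x ≠ c → ((ωo x c - W : ℤ) : WithTop ℤ) < U x) :
    ∃ ζ : X ≃ Fin (Fintype.card X),
      ∀ x : X, x ≠ c →
        S (ofInt (fun a b => if (ζ b : ℕ) < (ζ a : ℕ) then ωo a b + W else ωo a b - W)) x c
          < S (ofInt (fun a b => if (ζ b : ℕ) < (ζ a : ℕ) then ωo a b + W else ωo a b - W)) c x := by
  obtain ⟨ζ, hζU, hζν⟩ := exists_ranking hUc hR1
  refine ⟨ζ, fun x hxc => ?_⟩
  set F := ofInt (fun a b => if (ζ b : ℕ) < (ζ a : ℕ) then ωo a b + W else ωo a b - W)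
  have hedge : ∀ a b, a ≠ c → (b = c ∨ U a < U b) → F a b < U a := by
    intro a b hac hb
    have hba : ¬ ζ b < ζ a := fun h =>
      hb.elim (hζU b a h).2 fun hlt => hlt.not_ge (hζU b a h).1
    change (((if ζ b < ζ a then ωo a b + W else ωo a b - W : ℤ)) : WithTop ℤ) < U a
    rw [if_neg hba]
    by_cases hbc : b = c
    · exact hbc ▸ hup a hac
    · exact lt_of_not_ge fun hle => hR2 ⟨b, a, hbc, hac, hb.resolve_left hbc, hle⟩
  have hstep : ∀ v, v ≠ c → ∃ u, ζ v < ζ u ∧ U v ≤ U u ∧ U v ≤ F u v := fun v hvc =>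
    let ⟨u, hvu, hle⟩ := hζν v hvc
    ⟨u, hvu, (hζU v u hvu).1, by simpa [F, ofInt, hvu] using hle⟩
  exact (S_lt_of_edges F U hedge hxc).trans_le (coe_le_S_of_ranking F U hUc ζ hstep x)

theorem stmt14 {X : Type} [Fintype X] [DecidableEq X]
    (ωo : X → X → ℤ) (hskew : ∀ x y : X, x ≠ y → ωo x y = - ωo y x)
    (W : ℤ) (hW : 1 ≤ W) (c : X)
    (U : X → WithTop ℤ) (hUc : U c = ⊤)
    (hR1 : ∀ x : X, x ≠ c →
      ((U x : WithBot (WithTop ℤ)))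
        ≤ S (fun y z => min (((ωo y z + W : ℤ) : WithTop ℤ)) (U z)) c x)
    (hR2 : ¬ ∃ x y : X, x ≠ c ∧ y ≠ c ∧ U y < U x ∧ U y ≤ ((ωo y x - W : ℤ) : WithTop ℤ))
    (hup : ∀ x : X, x ≠ c → ((ωo x c - W : ℤ) : WithTop ℤ) < U x) :
    ∃ ζ : X ≃ Fin (Fintype.card X),
      ∀ x : X, x ≠ c →
        S (ofInt (fun a b => if (ζ b : ℕ) < (ζ a : ℕ) then ωo a b + W else ωo a b - W)) x c
          < S (ofInt (fun a b => if (ζ b : ℕ) < (ζ a : ℕ) then ωo a b + W else ωo a b - W)) c x :=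
  stmt14_general ωo W c U hUc hR1 hR2 hup

end Schulze
end
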